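/- Let P(z) = ∑_{j=0}^m a_j z^{m-j} be a polynomial with complex coefficients and N a positive integer with φ(N) ≤ m. Then the cyclotomic polynomial Φ_N(z) divides P(z) if and only if for every h ∈ {0, 1, ..., N-1}, ∑_{d | N} μ(d) ∑_{j ≡ h - ∑_{p | d} N/p (mod N)} a_j = 0, where the inner sum over primes p dividing d is taken to be 0 when d = 1. -/

import Mathlib

/-!
Write `A(z) = ∑ a_j z^j`. Since `P(η) = η^m A(η⁻¹)` and `η ↦ η⁻¹` permutes the primitive `N`-th
roots of unity, `Φ_N ∣ P` iff `A` vanishes at every primitive `N`-th root of unity. Let `T(g)` be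
the Möbius-weighted residue sums of the statement. Pairing `T` with an `N`-th root of unity `η`,
i.e. with a character of `ℤ/N`, turns the shifts by `∑_{p ∣ d} N/p` into multiplication, and
the Möbius sum collapses to a product:
`∑_g T(g) η^g = ∏_{p ∣ N} (1 - η^{N/p}) · A(η)`.
The product vanishes exactly when `η` is not primitive, so by Fourier inversion on `ℤ/N`,
`T = 0` iff `A` vanishes at all primitive `N`-th roots of unity.
-/

open Polynomial Finset
open scoped ArithmeticFunction.Moebius

section AddChar

variable {G R ι : Type*} [AddCommGroup G] [Fintype G] [CommRing R] (ψ : AddChar G R)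

theorem sum_fiberwise_mul_addChar [DecidableEq G] (s : Finset ι) (π : ι → G) (a : ι → R) :
    ∑ g, (∑ i ∈ s with π i = g, a i) * ψ g = ∑ i ∈ s, a i * ψ (π i) := by
  simp_rw [Finset.sum_mul]
  rw [← Finset.sum_fiberwise s π]
  refine Finset.sum_congr rfl fun g _ => Finset.sum_congr rfl fun i hi => ?_
  rw [(Finset.mem_filter.1 hi).2]

theorem sum_translates_mul_addChar (s : Finset ι) (w : ι → R) (c : ι → G) (e : G → R) :
    ∑ g, (∑ i ∈ s, w i * e (g - c i)) * ψ g = (∑ i ∈ s, w i * ψ (c i)) * ∑ g, e g * ψ g := by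
  have translate (i : ι) : ∑ g, e (g - c i) * ψ g = ψ (c i) * ∑ g, e g * ψ g := by
    rw [Finset.mul_sum]
    refine Fintype.sum_equiv (Equiv.subRight (c i)) _ _ fun g => ?_
    rw [Equiv.subRight_apply, mul_left_comm, ← AddChar.map_add_eq_mul, add_sub_cancel]
  simp_rw [Finset.sum_mul, mul_assoc]
  rw [Finset.sum_comm]
  simp_rw [← Finset.mul_sum, translate]

end AddChar

theorem sum_divisors_moebius_mul_prod_primeFactors {R : Type*} [CommRing R] {n : ℕ} (hn : n ≠ 0)
    (x : ℕ → R) :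
    ∑ d ∈ n.divisors, (μ d : R) * ∏ p ∈ d.primeFactors, x p = ∏ p ∈ n.primeFactors, (1 - x p) := by
  have hsq : ∀ d ∈ n.divisors, (μ d : R) * ∏ p ∈ d.primeFactors, x p ≠ 0 → Squarefree d :=
    fun d _ hd => ArithmeticFunction.moebius_ne_zero_iff_squarefree.1 fun h => hd (by simp [h])
  rw [← Finset.sum_filter_of_ne hsq, Nat.sum_divisors_filter_squarefree hn, Nat.factors_eq,
    List.toFinset_coe, Nat.toFinset_factors]
  simp_rw [sub_eq_add_neg, Finset.prod_one_add]
  refine Finset.sum_congr rfl fun t ht => ?_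
  have hprime : ∀ p ∈ t, p.Prime :=
    fun p hp => Nat.prime_of_mem_primeFactors (Finset.mem_powerset.1 ht hp)
  rw [Finset.prod_val, Function.id_def,
    ArithmeticFunction.isMultiplicative_moebius.map_prod_of_prime t hprime,
    Nat.primeFactors_prod hprime, Int.cast_prod, ← Finset.prod_mul_distrib]
  refine Finset.prod_congr rfl fun p hp => ?_
  rw [ArithmeticFunction.moebius_apply_prime (hprime p hp), Int.cast_neg, Int.cast_one, neg_one_mul]

theorem ZMod.eq_zero_of_forall_sum_mul_pow_val_eq_zero {N : ℕ} [NeZero N] {f : ZMod N → ℂ}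
    (h : ∀ η : ℂ, η ^ N = 1 → ∑ g, f g * η ^ g.val = 0) : f = 0 := by
  refine ZMod.dft.injective (funext fun k => ?_)
  have hk : ZMod.stdAddChar (-k) ^ N = 1 := by
    rw [← AddChar.map_nsmul_eq_pow, nsmul_eq_mul, ZMod.natCast_self, zero_mul,
      AddChar.map_zero_eq_one]
  rw [_root_.map_zero, Pi.zero_apply, ZMod.dft_apply, ← h _ hk]
  refine Finset.sum_congr rfl fun j _ => ?_
  rw [smul_eq_mul, mul_comm, ← AddChar.map_nsmul_eq_pow, nsmul_eq_mul, ZMod.natCast_zmod_val,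
    mul_neg]

theorem isPrimitiveRoot_iff_prod_one_sub_pow_div_ne_zero {R : Type*} [CommRing R] [IsDomain R]
    {n : ℕ} (hn : n ≠ 0) {η : R} (hη : η ^ n = 1) :
    IsPrimitiveRoot η n ↔ ∏ p ∈ n.primeFactors, (1 - η ^ (n / p)) ≠ 0 := by
  simp only [Finset.prod_ne_zero_iff, sub_ne_zero, Nat.mem_primeFactors_of_ne_zero hn,
    ne_comm (a := (1 : R))]
  refine ⟨fun h p ⟨hp, hpn⟩ => ?_, fun h => IsPrimitiveRoot.iff_orderOf.2 <|
    orderOf_eq_of_pow_and_pow_div_prime (Nat.pos_of_ne_zero hn) hη fun p hp hpn => h p ⟨hp, hpn⟩⟩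
  exact h.pow_ne_one_of_pos_of_lt (Nat.div_ne_zero_iff_of_dvd hpn |>.2 ⟨hn, hp.ne_zero⟩)
    (Nat.div_lt_self (Nat.pos_of_ne_zero hn) hp.one_lt)

theorem cyclotomic_dvd_iff_forall_isPrimitiveRoot_isRoot {K : Type*} [Field K] {n : ℕ}
    (hn : 0 < n) {ζ : K} (hζ : IsPrimitiveRoot ζ n) {P : K[X]} :
    cyclotomic n K ∣ P ↔ ∀ η, IsPrimitiveRoot η n → P.IsRoot η := by
  rw [cyclotomic_eq_prod_X_sub_primitiveRoots hζ]
  refine ⟨fun h η hη => dvd_iff_isRoot.1 <|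
      (Finset.dvd_prod_of_mem (fun ν => X - C ν) ((mem_primitiveRoots hn).2 hη)).trans h,
    fun h => ?_⟩
  exact Finset.prod_dvd_of_coprime
    (fun η _ ν _ hην => isCoprime_X_sub_C_of_isUnit_sub (sub_ne_zero.2 hην).isUnit)
    fun η hη => dvd_iff_isRoot.2 (h η ((mem_primitiveRoots hn).1 hη))

theorem eval_sum_C_mul_X_pow_sub {K : Type*} [Field K] (m : ℕ) (a : ℕ → K) {η : K} (hη : η ≠ 0) :
    (∑ j ∈ range (m + 1), C (a j) * X ^ (m - j)).eval η =
      η ^ m * ∑ j ∈ range (m + 1), a j * η⁻¹ ^ j := by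
  simp only [eval_finsetSum, eval_mul, eval_C, eval_pow, eval_X, Finset.mul_sum]
  refine Finset.sum_congr rfl fun j hj => ?_
  rw [inv_pow, pow_sub₀ _ hη (Nat.lt_succ_iff.1 (Finset.mem_range.1 hj))]
  ring

theorem forall_isPrimitiveRoot_eval_sum_C_mul_X_pow_sub_eq_zero_iff {K : Type*} [Field K] {n : ℕ}
    (hn : n ≠ 0) (m : ℕ) (a : ℕ → K) :
    (∀ η, IsPrimitiveRoot η n → (∑ j ∈ range (m + 1), C (a j) * X ^ (m - j)).eval η = 0) ↔
      ∀ η, IsPrimitiveRoot η n → ∑ j ∈ range (m + 1), a j * η ^ j = 0 := by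
  have key (η : K) (hη : IsPrimitiveRoot η n) :
      (∑ j ∈ range (m + 1), C (a j) * X ^ (m - j)).eval η = 0 ↔
        ∑ j ∈ range (m + 1), a j * η⁻¹ ^ j = 0 := by
    rw [eval_sum_C_mul_X_pow_sub m a (hη.ne_zero hn), mul_eq_zero,
      or_iff_right (pow_ne_zero _ (hη.ne_zero hn))]
  refine ⟨fun h η hη => ?_, fun h η hη => (key η hη).2 (h _ hη.inv)⟩
  simpa using (key _ hη.inv).1 (h _ hη.inv)

noncomputable def moebiusResidueSum (N m : ℕ) (a : ℕ → ℂ) (g : ZMod N) : ℂ :=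
  ∑ d ∈ N.divisors, (μ d : ℂ) *
    ∑ j ∈ (range (m + 1)).filter
      (fun j : ℕ => (j : ZMod N) = g - ((∑ p ∈ d.primeFactors, N / p : ℕ) : ZMod N)), a j

section MoebiusResidueSum

variable {N : ℕ} (m : ℕ) (a : ℕ → ℂ)

theorem sum_moebiusResidueSum_mul_pow_val [NeZero N] {η : ℂ} (hη : η ^ N = 1) :
    ∑ g, moebiusResidueSum N m a g * η ^ g.val =
      (∏ p ∈ N.primeFactors, (1 - η ^ (N / p))) * ∑ j ∈ range (m + 1), a j * η ^ j := by
  simp_rw [← AddChar.zmodChar_apply hη, moebiusResidueSum]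
  rw [sum_translates_mul_addChar _ _ _ _ fun g =>
    ∑ j ∈ (range (m + 1)).filter (fun j : ℕ => (j : ZMod N) = g), a j,
    sum_fiberwise_mul_addChar]
  simp_rw [AddChar.zmodChar_apply' hη, ← Finset.prod_pow_eq_pow_sum]
  rw [sum_divisors_moebius_mul_prod_primeFactors (NeZero.ne N)]

theorem moebiusResidueSum_eq_zero_iff (hN : N ≠ 0) :
    moebiusResidueSum N m a = 0 ↔
      ∀ η : ℂ, IsPrimitiveRoot η N → ∑ j ∈ range (m + 1), a j * η ^ j = 0 := by
  have : NeZero N := ⟨hN⟩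
  refine ⟨fun h η hη => ?_,
    fun h => ZMod.eq_zero_of_forall_sum_mul_pow_val_eq_zero fun η hη => ?_⟩
  · have hsum := sum_moebiusResidueSum_mul_pow_val m a hη.pow_eq_one
    simp only [h, Pi.zero_apply, zero_mul, Finset.sum_const_zero] at hsum
    exact (mul_eq_zero.1 hsum.symm).resolve_left
      ((isPrimitiveRoot_iff_prod_one_sub_pow_div_ne_zero hN hη.pow_eq_one).1 hη)
  · rw [sum_moebiusResidueSum_mul_pow_val m a hη]
    by_cases hprim : IsPrimitiveRoot η N
    · rw [h η hprim, mul_zero]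
    · rw [not_not.1 (mt (isPrimitiveRoot_iff_prod_one_sub_pow_div_ne_zero hN hη).2 hprim),
        zero_mul]

end MoebiusResidueSum

theorem divisibility_by_cyclotomic (m N : ℕ) (a : ℕ → ℂ) (hN : 1 ≤ N) :
    (Polynomial.cyclotomic N ℂ ∣ ∑ j ∈ Finset.range (m + 1), C (a j) * X ^ (m - j)) ↔
      ∀ h < N,
        ∑ d ∈ N.divisors, (ArithmeticFunction.moebius d : ℂ) *
          ∑ j ∈ (Finset.range (m + 1)).filter
              (fun (j : ℕ) => (j : ℤ) ≡
                (h : ℤ) - ∑ p ∈ d.primeFactors, ((N / p : ℕ) : ℤ) [ZMOD (N : ℤ)]),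
            a j = 0 := by
  have hN0 : N ≠ 0 := Nat.one_le_iff_ne_zero.1 hN
  have : NeZero N := ⟨hN0⟩
  rw [cyclotomic_dvd_iff_forall_isPrimitiveRoot_isRoot hN (Complex.isPrimitiveRoot_exp N hN0)]
  simp_rw [IsRoot.def]
  rw [forall_isPrimitiveRoot_eval_sum_C_mul_X_pow_sub_eq_zero_iff hN0,
    ← moebiusResidueSum_eq_zero_iff m a hN0, funext_iff]
  simp only [moebiusResidueSum, Pi.zero_apply, ← ZMod.intCast_eq_intCast_iff, Int.cast_sub,
    Int.cast_sum, Int.cast_natCast, Nat.cast_sum]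
  exact ⟨fun H h _ => H h, fun H g => by simpa using H g.val g.val_lt⟩
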